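/- arXiv:2412.07703 — 5 statements merged into one kernel-verified Lean document; each statement's English description precedes it below -/
import Mathlib

section
/- Under hypothesis (a.5), if additionally γ''' is monotone (decreasing, negative), then |γ'''(t)| ≥ (1/(2ε))·γ''(t)/t for all small t > 0. -/
open Real Set

theorem mul_sub_le_sub_of_hasDerivAt_of_monotoneOn {f f' : ℝ → ℝ} {a b : ℝ} (hab : a ≤ b)
    (hf : ∀ x ∈ Icc a b, HasDerivAt f (f' x) x) (hf' : MonotoneOn f' (Icc a b)) :
    f' a * (b - a) ≤ f b - f a := by
  have ha : a ∈ Icc a b := left_mem_Icc.2 hab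
  refine (convex_Icc a b).mul_sub_le_image_sub_of_le_deriv
    (fun x hx => (hf x hx).continuousAt.continuousWithinAt)
    (fun x hx => (hf x (interior_subset hx)).differentiableAt.differentiableWithinAt)
    (fun x hx => ?_) a ha b (right_mem_Icc.2 hab) hab
  have hx' : x ∈ Icc a b := interior_subset hx
  rw [(hf x hx').deriv]
  exact hf' ha hx' hx'.1

/-- Since `f` lies above its tangent at `t`, `-f' t · ε t ≥ f t - f ((1 + ε) t) ≥ f t / 2`. -/
theorem div_le_neg_deriv_of_two_mul_le {f f' : ℝ → ℝ} {ε t : ℝ} (hε : 0 < ε) (ht : 0 < t)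
    (hf : ∀ x ∈ Icc t ((1 + ε) * t), HasDerivAt f (f' x) x)
    (hf' : MonotoneOn f' (Icc t ((1 + ε) * t))) (hhalf : 2 * f ((1 + ε) * t) ≤ f t) :
    1 / (2 * ε) * (f t / t) ≤ -f' t := by
  have hslope : f' t * (ε * t) ≤ f ((1 + ε) * t) - f t := by
    have := mul_sub_le_sub_of_hasDerivAt_of_monotoneOn (by nlinarith) hf hf'
    rwa [show (1 + ε) * t - t = ε * t by ring] at this
  rw [div_mul_div_comm, one_mul, div_le_iff₀ (by positivity)]
  nlinarith

theorem stmt_1_general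
    (γ'' γ''' : ℝ → ℝ)
    (hderiv : ∀ t ∈ Ioc (0:ℝ) 1, HasDerivAt γ'' (γ''' t) t)
    (hanti3 : AntitoneOn (fun t => -γ''' t) (Ioc (0:ℝ) 1))
    (ε t₀ : ℝ) (hε : 0 < ε)
    (ht₀ : t₀ ∈ Ioc (0:ℝ) 1)
    (ha5 : ∀ t : ℝ, 0 < t → t < t₀ → γ'' t ≥ 2 * γ'' ((1 + ε) * t)) :
    ∃ T : ℝ, 0 < T ∧ ∀ t : ℝ, 0 < t → t < T →
      |γ''' t| ≥ (1 / (2 * ε)) * (γ'' t / t) := by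
  refine ⟨t₀ / (1 + ε), div_pos ht₀.1 (by linarith), fun t ht htT => ?_⟩
  have hend : (1 + ε) * t < t₀ := by
    rwa [lt_div_iff₀ (by linarith), mul_comm] at htT
  have hsub : Icc t ((1 + ε) * t) ⊆ Ioc 0 1 :=
    fun x hx => ⟨ht.trans_le hx.1, hx.2.trans (hend.le.trans ht₀.2)⟩
  have hmono : MonotoneOn γ''' (Icc t ((1 + ε) * t)) :=
    fun x hx y hy hxy => neg_le_neg_iff.1 (hanti3 (hsub hx) (hsub hy) hxy)
  calc 1 / (2 * ε) * (γ'' t / t)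
      ≤ -γ''' t := div_le_neg_deriv_of_two_mul_le hε ht (fun x hx => hderiv x (hsub hx)) hmono
          (ha5 t ht (by nlinarith))
    _ ≤ |γ''' t| := neg_le_abs _

/-- under (a.5) and monotonicity of γ''' (decreasing, negative),
    |γ'''(t)| ≥ (1/(2ε))·γ''(t)/t for all small t > 0. -/
theorem stmt_1
    (γ'' γ''' : ℝ → ℝ)
    (hderiv : ∀ t ∈ Ioc (0:ℝ) 1, HasDerivAt γ'' (γ''' t) t)
    (hpos : ∀ t ∈ Ioc (0:ℝ) 1, 0 < γ'' t)
    (hanti2 : StrictAntiOn γ'' (Ioc (0:ℝ) 1))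
    (hneg3 : ∀ t ∈ Ioc (0:ℝ) 1, γ''' t < 0)
    (hanti3 : AntitoneOn (fun t => -γ''' t) (Ioc (0:ℝ) 1))
    (ε t₀ : ℝ) (hε : 0 < ε) (hε2 : (1 + ε)^2 < 2)
    (ht₀ : t₀ ∈ Ioc (0:ℝ) 1)
    (ha5 : ∀ t : ℝ, 0 < t → t < t₀ → γ'' t ≥ 2 * γ'' ((1 + ε) * t)) :
    ∃ T : ℝ, 0 < T ∧ ∀ t : ℝ, 0 < t → t < T →
      |γ''' t| ≥ (1 / (2 * ε)) * (γ'' t / t) :=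
  stmt_1_general γ'' γ''' hderiv hanti3 ε t₀ hε ht₀ ha5
end

section
/- Under hypothesis (a.5), there exists a constant C' > 0 and an exponent α > 1 such that γ''(t) ≥ C'/t^{1+α} for all t ∈ (0, t₀), where α = log(2/(1+ε))/log(1+ε). -/
open Real Set

/-!
Iterating `γ''(t) ≥ 2 γ''((1+ε) t)` along `t, (1+ε) t, (1+ε)² t, …` until the orbit leaves
`(0, t₀)` after `n` steps gives `γ''(t) ≥ 2ⁿ γ''(t₀)` by monotonicity, while `t₀ / t < (1+ε)ⁿ⁺¹`.
Since `(1+ε) ^ logb (1+ε) 2 = 2`, this reads `γ''(t) ≳ t ^ (-logb (1+ε) 2)`, and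
`logb (1+ε) 2 = 1 + α` with `α > 1` exactly when `(1+ε)² < 2`.
-/

lemma one_lt_log_two_div_div_log {q : ℝ} (hq : 1 < q) (hq2 : q ^ 2 < 2) :
    1 < log (2 / q) / log q := by
  have hq0 : 0 < q := by linarith
  have hq_lt : q < 2 / q := by rw [lt_div_iff₀ hq0]; nlinarith
  rw [one_lt_div (log_pos hq)]
  exact log_lt_log hq0 hq_lt

lemma one_add_log_two_div_div_log {q : ℝ} (hq : 0 < q) (hq1 : q ≠ 1) :
    1 + log (2 / q) / log q = logb q 2 := by
  have hlog : log q ≠ 0 := log_ne_zero_of_pos_of_ne_one hq hq1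
  rw [log_div two_ne_zero hq.ne', logb]
  field_simp
  ring

lemma pow_mul_le_of_mul_le_comp {f : ℝ → ℝ} {q c t₀ : ℝ} (hq : 1 < q) (hc : 0 ≤ c)
    (h : ∀ t, 0 < t → t < t₀ → c * f (q * t) ≤ f t) :
    ∀ n : ℕ, ∀ t, 0 < t → q ^ n * t ≤ t₀ → c ^ n * f (q ^ n * t) ≤ f t
  | 0, t, _, _ => by simp
  | n + 1, t, ht, hn => by
    have hlt : q ^ n * t < t₀ :=
      (mul_lt_mul_of_pos_right (pow_lt_pow_right₀ hq n.lt_succ_self) ht).trans_le hn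
    calc c ^ (n + 1) * f (q ^ (n + 1) * t) = c ^ n * (c * f (q * (q ^ n * t))) := by ring_nf
      _ ≤ c ^ n * f (q ^ n * t) := by gcongr; exact h _ (by positivity) hlt
      _ ≤ f t := pow_mul_le_of_mul_le_comp hq hc h n t ht hlt.le

lemma AntitoneOn.div_rpow_logb_le_of_mul_le_comp {f : ℝ → ℝ} {q c t₀ : ℝ} (hq : 1 < q)
    (hc : 1 ≤ c) (hf : AntitoneOn f (Ioc 0 t₀)) (hft₀ : 0 ≤ f t₀)
    (h : ∀ t, 0 < t → t < t₀ → c * f (q * t) ≤ f t) {t : ℝ} (ht : 0 < t) (htt₀ : t ≤ t₀) :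
    f t₀ * t₀ ^ logb q c / c / t ^ logb q c ≤ f t := by
  have hq0 : 0 < q := by linarith
  have hc0 : 0 < c := by linarith
  obtain ⟨n, hn_le, hn_lt⟩ := exists_nat_pow_near ((one_le_div ht).2 htt₀) hq
  rw [le_div_iff₀ ht] at hn_le
  have hiter : c ^ n * f t₀ ≤ f t :=
    calc c ^ n * f t₀ ≤ c ^ n * f (q ^ n * t) :=
          mul_le_mul_of_nonneg_left (hf ⟨by positivity, hn_le⟩ ⟨ht.trans_le htt₀, le_rfl⟩ hn_le)
            (pow_nonneg hc0.le n)
      _ ≤ f t := pow_mul_le_of_mul_le_comp hq hc0.le h n t ht hn_le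
  have hratio : (t₀ / t) ^ logb q c ≤ c ^ (n + 1) :=
    calc (t₀ / t) ^ logb q c ≤ (q ^ (n + 1)) ^ logb q c :=
          rpow_le_rpow (div_nonneg (ht.le.trans htt₀) ht.le) hn_lt.le (logb_nonneg hq hc)
      _ = c ^ (n + 1) := by
          rw [← rpow_natCast, ← rpow_mul hq0.le, mul_comm, rpow_mul hq0.le,
            rpow_logb hq0 hq.ne' hc0, rpow_natCast]
  calc f t₀ * t₀ ^ logb q c / c / t ^ logb q c = f t₀ * (t₀ / t) ^ logb q c / c := by
        rw [div_rpow (ht.le.trans htt₀) ht.le]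
        ring
    _ ≤ f t₀ * c ^ (n + 1) / c := 
        div_le_div_of_nonneg_right (mul_le_mul_of_nonneg_left hratio hft₀) hc0.le
    _ = c ^ n * f t₀ := by field_simp; ring
    _ ≤ f t := hiter

/-- under (a.5), γ''(t) ≥ C'/t^{1+α} on (0,t₀), with
    α = log(2/(1+ε))/log(1+ε) > 1. -/
theorem stmt_2
    (γ'' : ℝ → ℝ)
    (hpos : ∀ t ∈ Ioc (0:ℝ) 1, 0 < γ'' t)
    (hanti : StrictAntiOn γ'' (Ioc (0:ℝ) 1))
    (ε t₀ : ℝ) (hε : 0 < ε) (hε2 : (1 + ε)^2 < 2)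
    (ht₀ : t₀ ∈ Ioc (0:ℝ) 1)
    (ha5 : ∀ t : ℝ, 0 < t → t < t₀ → γ'' t ≥ 2 * γ'' ((1 + ε) * t)) :
    Real.log (2 / (1 + ε)) / Real.log (1 + ε) > 1 ∧
    ∃ C' : ℝ, 0 < C' ∧ ∀ t : ℝ, 0 < t → t < t₀ →
      γ'' t ≥ C' / t ^ (1 + Real.log (2 / (1 + ε)) / Real.log (1 + ε)) := by
  have hq : 1 < 1 + ε := by linarith
  refine ⟨one_lt_log_two_div_div_log hq hε2, γ'' t₀ * t₀ ^ logb (1 + ε) 2 / 2,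
    div_pos (mul_pos (hpos t₀ ht₀) (rpow_pos_of_pos ht₀.1 _)) two_pos, fun t ht htt₀ => ?_⟩
  rw [one_add_log_two_div_div_log (by linarith) hq.ne']
  exact (hanti.antitoneOn.mono (Ioc_subset_Ioc_right ht₀.2)).div_rpow_logb_le_of_mul_le_comp
    hq one_le_two (hpos t₀ ht₀).le ha5 ht htt₀.le
end

section
/- Under hypothesis (a.5), there exist constants C > 0 and δ > 0 such that γ''(t) ≥ C·γ''(t)^δ / t² for all small t > 0; one may take δ = (α−1)/(α+1) where α = log(2/(1+ε))/log(1+ε). -/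
/-!
Write `q = 1 + ε` and `α = log (2/q) / log q`, so that `q ^ (1 + α) = 2` and `α > 1` because
`q² < 2`. Iterating (a.5) from `t` up to the last point `qⁿ t ≤ t₀` gives
`γ''(t) ≥ 2ⁿ γ''(t₀) ≳ (t₀/t)^(1+α) γ''(t₀)`, i.e. `γ''(t) ≥ K / t^(1+α)`. Splitting
`γ'' = γ''^δ · γ''^(1-δ)` and bounding the second factor from below turns this into
`γ''(t) ≥ K^(1-δ) γ''(t)^δ / t^((1+α)(1-δ))`, and `(1+α)(1-δ) = 2` for `δ = (α-1)/(α+1)`.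
-/

open Real Set

theorem pow_mul_comp_pow_mul_le_of_scaling {f : ℝ → ℝ} {c q t₀ : ℝ} (hc : 0 ≤ c) (hq : 1 < q)
    (h : ∀ t, 0 < t → t < t₀ → c * f (q * t) ≤ f t) (n : ℕ) {t : ℝ} (ht : 0 < t)
    (hn : q ^ n * t ≤ t₀) : c ^ n * f (q ^ n * t) ≤ f t := by
  induction n generalizing t with
  | zero => simp
  | succ n ih =>
    have htt₀ : t < t₀ := lt_of_lt_of_le (lt_mul_left ht (one_lt_pow₀ hq n.succ_ne_zero)) hn
    have hqt : q ^ n * (q * t) ≤ t₀ := by rwa [← mul_assoc, ← pow_succ]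
    calc c ^ (n + 1) * f (q ^ (n + 1) * t) = c * (c ^ n * f (q ^ n * (q * t))) := by
          rw [pow_succ, pow_succ, mul_assoc (q ^ n)]; ring
      _ ≤ c * f (q * t) := mul_le_mul_of_nonneg_left (ih (by positivity) hqt) hc
      _ ≤ f t := h t ht htt₀

theorem AntitoneOn.div_mul_rpow_le_of_scaling {f : ℝ → ℝ} {q p t₀ : ℝ}
    (hf : AntitoneOn f (Ioc 0 t₀)) (hf₀ : 0 ≤ f t₀) (hq : 1 < q) (hp : 0 ≤ p)
    (h : ∀ t, 0 < t → t < t₀ → q ^ p * f (q * t) ≤ f t) {t : ℝ} (ht : 0 < t) (htt₀ : t ≤ t₀) :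
    f t₀ / q ^ p * (t₀ / t) ^ p ≤ f t := by
  have hq₀ : 0 < q := one_pos.trans hq
  have ht₀ : 0 < t₀ := ht.trans_le htt₀
  obtain ⟨n, hn, hn'⟩ := exists_nat_pow_near ((one_le_div ht).2 htt₀) hq
  have hqnt : q ^ n * t ≤ t₀ := (le_div_iff₀ ht).1 hn
  have hratio : (t₀ / t) ^ p ≤ (q ^ p) ^ (n + 1) := by
    rw [rpow_pow_comm hq₀.le]
    exact rpow_le_rpow (by positivity) hn'.le hp
  calc f t₀ / q ^ p * (t₀ / t) ^ p ≤ f t₀ / q ^ p * (q ^ p) ^ (n + 1) := by gcongr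
    _ = (q ^ p) ^ n * f t₀ := by field_simp; ring
    _ ≤ (q ^ p) ^ n * f (q ^ n * t) := by
        gcongr
        exact hf ⟨by positivity, hqnt⟩ ⟨ht₀, le_rfl⟩ hqnt
    _ ≤ f t := pow_mul_comp_pow_mul_le_of_scaling (by positivity) hq h n ht hqnt

theorem mul_rpow_div_rpow_le_of_div_rpow_le {y K t p δ : ℝ} (hy : 0 < y) (hK : 0 ≤ K)
    (ht : 0 < t) (hδ : δ ≤ 1) (h : K / t ^ p ≤ y) :
    K ^ (1 - δ) * y ^ δ / t ^ (p * (1 - δ)) ≤ y := by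
  calc K ^ (1 - δ) * y ^ δ / t ^ (p * (1 - δ)) = y ^ δ * (K / t ^ p) ^ (1 - δ) := by
        rw [div_rpow hK (rpow_nonneg ht.le p), ← rpow_mul ht.le]; ring
    _ ≤ y ^ δ * y ^ (1 - δ) := by gcongr
    _ = y := by rw [← rpow_add hy, add_sub_cancel, rpow_one]

theorem rpow_one_add_log_div_div_log {q x : ℝ} (hq₀ : 0 < q) (hq₁ : q ≠ 1) (hx : 0 < x) :
    q ^ (1 + log (x / q) / log q) = x := by
  rw [rpow_add hq₀, rpow_one, log_div_log, rpow_logb hq₀ hq₁ (by positivity)]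
  field_simp

/-- under (a.5), γ''(t) ≥ C·γ''(t)^δ/t² for small t, with
    δ = (α−1)/(α+1), α = log(2/(1+ε))/log(1+ε). -/
theorem stmt_3
    (γ'' : ℝ → ℝ)
    (hpos : ∀ t ∈ Ioc (0:ℝ) 1, 0 < γ'' t)
    (hanti : StrictAntiOn γ'' (Ioc (0:ℝ) 1))
    (ε t₀ : ℝ) (hε : 0 < ε) (hε2 : (1 + ε)^2 < 2)
    (ht₀ : t₀ ∈ Ioc (0:ℝ) 1)
    (ha5 : ∀ t : ℝ, 0 < t → t < t₀ → γ'' t ≥ 2 * γ'' ((1 + ε) * t)) :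
    ∃ C δ : ℝ, 0 < C ∧ 0 < δ ∧
      δ = (Real.log (2 / (1 + ε)) / Real.log (1 + ε) - 1) /
          (Real.log (2 / (1 + ε)) / Real.log (1 + ε) + 1) ∧
      ∃ T : ℝ, 0 < T ∧ ∀ t : ℝ, 0 < t → t < T →
        γ'' t ≥ C * γ'' t ^ δ / t ^ 2 := by
  set q := 1 + ε
  set α := log (2 / q) / log q
  have hq : 1 < q := by linarith
  have hα : 1 < α := by
    rw [lt_div_iff₀ (log_pos hq), one_mul]
    exact log_lt_log (by positivity) ((lt_div_iff₀ (by positivity)).2 (by nlinarith))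
  have hqα : q ^ (1 + α) = 2 := rpow_one_add_log_div_div_log (by positivity) hq.ne' two_pos
  have hexp : (1 + α) * (1 - (α - 1) / (α + 1)) = 2 := by field_simp; ring
  set δ := (α - 1) / (α + 1)
  have hδ₀ : 0 < δ := div_pos (by linarith) (by linarith)
  have hδ₁ : δ ≤ 1 := (div_le_one (by linarith)).2 (by linarith)
  set K := γ'' t₀ / 2 * t₀ ^ (1 + α)
  have hK : 0 < K := mul_pos (half_pos (hpos t₀ ht₀)) (rpow_pos_of_pos ht₀.1 _)
  refine ⟨K ^ (1 - δ), δ, rpow_pos_of_pos hK _, hδ₀, rfl, t₀, ht₀.1, fun t ht htt₀ => ?_⟩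
  have hpower : K / t ^ (1 + α) ≤ γ'' t := by
    rw [mul_div_assoc, ← div_rpow ht₀.1.le ht.le, ← hqα]
    exact (hanti.antitoneOn.mono (Ioc_subset_Ioc_right ht₀.2)).div_mul_rpow_le_of_scaling
      (hpos t₀ ht₀).le hq (by linarith) (fun s hs hst₀ => hqα ▸ ha5 s hs hst₀) ht htt₀.le
  have := mul_rpow_div_rpow_le_of_div_rpow_le (hpos t ⟨ht, by linarith [ht₀.2]⟩) hK.le ht hδ₁
    hpower
  rwa [hexp, rpow_two] at this
end

section
/- Under hypotheses (a.5) and monotonicity of γ''' (with γ''' < 0), there exist constants C > 0 and δ > 0 such that |γ'''(t)| ≥ C·γ''(t)^δ / t³ for all small t > 0. -/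
open Real Set

/-- Lemma 4.3: under (a.5) and monotone negative γ''',
    |γ'''(t)| ≥ C·γ''(t)^δ/t³ for small t. -/
theorem stmt_4
    (γ'' γ''' : ℝ → ℝ)
    (hderiv : ∀ t ∈ Ioc (0:ℝ) 1, HasDerivAt γ'' (γ''' t) t)
    (hpos : ∀ t ∈ Ioc (0:ℝ) 1, 0 < γ'' t)
    (hanti2 : StrictAntiOn γ'' (Ioc (0:ℝ) 1))
    (htop : Filter.Tendsto γ'' (nhdsWithin 0 (Ioi 0)) Filter.atTop)
    (hneg3 : ∀ t ∈ Ioc (0:ℝ) 1, γ''' t < 0)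
    (hmono3 : AntitoneOn (fun t => -γ''' t) (Ioc (0:ℝ) 1))
    (ε t₀ : ℝ) (hε : 0 < ε) (hε2 : (1 + ε)^2 < 2)
    (ht₀ : t₀ ∈ Ioc (0:ℝ) 1)
    (ha5 : ∀ t : ℝ, 0 < t → t < t₀ → γ'' t ≥ 2 * γ'' ((1 + ε) * t)) :
    ∃ C δ : ℝ, 0 < C ∧ 0 < δ ∧
      ∃ T : ℝ, 0 < T ∧ ∀ t : ℝ, 0 < t → t < T →
        |γ''' t| ≥ C * γ'' t ^ δ / t ^ 3 := by
  have h1ε : (1:ℝ) < 1 + ε := by linarith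
  have hlε : 0 < Real.log (1 + ε) := Real.log_pos h1ε
  have hl2 : 0 < Real.log 2 := Real.log_pos one_lt_two
  set lε := Real.log (1 + ε) with hlεdef
  set β := Real.log 2 / lε with hβdef
  have hβ2 : 2 < β := by
    have h : Real.log ((1 + ε) ^ 2) < Real.log 2 :=
      Real.log_lt_log (by positivity) hε2
    rw [Real.log_pow] at h
    rw [hβdef, lt_div_iff₀ hlε]
    push_cast at h
    linarith
  have hβpos : 0 < β := by linarith
  set δ := 1 - 2 / β with hδdef
  have hδpos : 0 < δ := by
    have h : 2 / β < 1 := (div_lt_one hβpos).2 hβ2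
    rw [hδdef]; linarith
  have ht₀pos : 0 < t₀ := ht₀.1
  have ht₀1 : t₀ ≤ 1 := ht₀.2
  have hKpos : 0 < γ'' t₀ / 2 := by
    have := hpos t₀ ht₀; linarith
  set K : ℝ := γ'' t₀ / 2 with hKdef
  -- iterated doubling
  have key : ∀ n : ℕ, ∀ t : ℝ, 0 < t → (1 + ε) ^ n * t ≤ t₀ →
      2 ^ n * γ'' t₀ ≤ γ'' t := by
    intro n
    induction n with
    | zero =>
      intro t ht hle
      simp only [pow_zero, one_mul] at hle ⊢
      rcases eq_or_lt_of_le hle with h | h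
      · rw [h]
      · exact (hanti2 ⟨ht, le_trans hle ht₀1⟩ ht₀ h).le
    | succ n ih =>
      intro t ht hle
      have hpow : (1:ℝ) < (1 + ε) ^ (n + 1) := one_lt_pow₀ h1ε (Nat.succ_ne_zero n)
      have hlt : t < t₀ := by nlinarith
      have ha := ha5 t ht hlt
      have hstep : (1 + ε) ^ n * ((1 + ε) * t) ≤ t₀ := by
        rw [pow_succ, mul_comm ((1+ε)^n) (1+ε)] at hle
        linarith [hle, mul_assoc (1+ε) ((1+ε)^n) t]
      have ih' := ih ((1 + ε) * t) (by positivity) (by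
        calc (1 + ε) ^ n * ((1 + ε) * t) ≤ t₀ := hstep)
      calc 2 ^ (n + 1) * γ'' t₀ = 2 * (2 ^ n * γ'' t₀) := by ring
        _ ≤ 2 * γ'' ((1 + ε) * t) := by linarith
        _ ≤ γ'' t := ha
  -- power-law lower bound
  have powbound : ∀ t : ℝ, 0 < t → t ≤ t₀ → K * (t₀ / t) ^ β ≤ γ'' t := by
    intro t ht hle
    have hrat : (1:ℝ) ≤ t₀ / t := (one_le_div ht).2 hle
    have hratpos : 0 < t₀ / t := by positivity
    have hlog : 0 ≤ Real.log (t₀ / t) := Real.log_nonneg hrat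
    set x := Real.log (t₀ / t) / lε with hxdef
    have hx : 0 ≤ x := by positivity
    set n := ⌊x⌋₊ with hndef
    have hn1 : (n : ℝ) ≤ x := Nat.floor_le hx
    have hn2 : x < n + 1 := Nat.lt_floor_add_one x
    have hA : (1 + ε) ^ n * t ≤ t₀ := by
      have h1 : (1 + ε) ^ n ≤ t₀ / t := by
        have hlogpow : Real.log ((1 + ε) ^ n) ≤ Real.log (t₀ / t) := by
          rw [Real.log_pow]
          have h2 : (n : ℝ) * lε ≤ x * lε :=
            mul_le_mul_of_nonneg_right hn1 hlε.le
          have h3 : x * lε = Real.log (t₀ / t) := by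
            rw [hxdef]; field_simp
          linarith
        have h4 := Real.exp_le_exp.2 hlogpow
        rwa [Real.exp_log (by positivity), Real.exp_log hratpos] at h4
      calc (1 + ε) ^ n * t ≤ (t₀ / t) * t :=
            mul_le_mul_of_nonneg_right h1 ht.le
        _ = t₀ := by field_simp
    have hB : (t₀ / t) ^ β < 2 ^ (n + 1) := by
      rw [Real.rpow_def_of_pos hratpos]
      have h5 : Real.log (t₀ / t) * β = x * Real.log 2 := by
        rw [hxdef, hβdef]; field_simp; try ring
      have h6 : Real.log (t₀ / t) * β < ((n : ℝ) + 1) * Real.log 2 := by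
        rw [h5]; exact mul_lt_mul_of_pos_right hn2 hl2
      calc Real.exp (Real.log (t₀ / t) * β)
          < Real.exp (((n : ℝ) + 1) * Real.log 2) := Real.exp_lt_exp.2 h6
        _ = 2 ^ (n + 1) := by
            have h7 : ((n : ℝ) + 1) * Real.log 2 = Real.log ((2:ℝ) ^ (n + 1)) := by
              rw [Real.log_pow]; push_cast; ring
            rw [h7, Real.exp_log (by positivity)]
    have hkey := key n t ht hA
    calc K * (t₀ / t) ^ β ≤ K * 2 ^ (n + 1) :=
          mul_le_mul_of_nonneg_left hB.le hKpos.le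
      _ = 2 ^ n * γ'' t₀ := by rw [hKdef, pow_succ]; ring
      _ ≤ γ'' t := hkey
  -- mean value theorem step
  have hmvt : ∀ t : ℝ, 0 < t → t < t₀ → (1 + ε) * t ≤ 1 →
      γ'' t ≤ (-γ''' t) * (2 * ε * t) := by
    intro t ht hlt h1
    have hab : t < (1 + ε) * t := by nlinarith
    have hmem : ∀ x ∈ Icc t ((1 + ε) * t), x ∈ Ioc (0:ℝ) 1 :=
      fun x hx => ⟨lt_of_lt_of_le ht hx.1, le_trans hx.2 h1⟩
    have hcont : ContinuousOn γ'' (Icc t ((1 + ε) * t)) :=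
      fun x hx => ((hderiv x (hmem x hx)).continuousAt).continuousWithinAt
    have hd : ∀ x ∈ Ioo t ((1 + ε) * t), HasDerivAt γ'' (γ''' x) x :=
      fun x hx => hderiv x (hmem x ⟨hx.1.le, hx.2.le⟩)
    obtain ⟨c, hc, hceq⟩ := exists_hasDerivAt_eq_slope γ'' γ''' hab hcont hd
    have hcmem : c ∈ Ioc (0:ℝ) 1 := hmem c ⟨hc.1.le, hc.2.le⟩
    have htmem : t ∈ Ioc (0:ℝ) 1 := ⟨ht, by nlinarith⟩
    have hmono := hmono3 htmem hcmem hc.1.le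
    simp only at hmono
    have ha := ha5 t ht hlt
    have h5 : γ''' c * (ε * t) = γ'' ((1 + ε) * t) - γ'' t := by
      rw [hceq]
      have hden : (1 + ε) * t - t = ε * t := by ring
      rw [hden]
      field_simp
    have h6 : (-γ''' c) * (2 * ε * t) ≤ (-γ''' t) * (2 * ε * t) :=
      mul_le_mul_of_nonneg_right hmono (by positivity)
    nlinarith [h5, ha, h6]
  -- assemble constants
  set K2 : ℝ := K ^ (2 / β) with hK2def
  have hK2pos : 0 < K2 := Real.rpow_pos_of_pos hKpos _
  refine ⟨K2 * t₀ ^ 2 / (2 * ε), δ, by positivity, hδpos,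
    min t₀ (1 / (1 + ε)), lt_min ht₀pos (by positivity), ?_⟩
  intro t ht hT
  have hlt : t < t₀ := lt_of_lt_of_le hT (min_le_left _ _)
  have hTε : t < 1 / (1 + ε) := lt_of_lt_of_le hT (min_le_right _ _)
  have h1 : (1 + ε) * t ≤ 1 := by
    rw [lt_div_iff₀ (by linarith : (0:ℝ) < 1 + ε)] at hTε
    nlinarith
  have htmem : t ∈ Ioc (0:ℝ) 1 := ⟨ht, by nlinarith⟩
  have hg : 0 < γ'' t := hpos t htmem
  have hneg := hneg3 t htmem
  have hm := hmvt t ht hlt h1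
  have hpb := powbound t ht hlt.le
  set A : ℝ := γ'' t ^ δ with hAdef
  set B : ℝ := γ'' t ^ (2 / β) with hBdef
  have hApos : 0 < A := Real.rpow_pos_of_pos hg _
  have hBpos : 0 < B := Real.rpow_pos_of_pos hg _
  have hAB : γ'' t = A * B := by
    rw [hAdef, hBdef, ← Real.rpow_add hg]
    have hsum : δ + 2 / β = 1 := by rw [hδdef]; ring
    rw [hsum, Real.rpow_one]
  have hBb : K2 * t₀ ^ 2 ≤ B * t ^ 2 := by
    have h7 : (K * (t₀ / t) ^ β) ^ (2 / β) ≤ B :=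
      Real.rpow_le_rpow (by positivity) hpb (by positivity)
    have h8 : (K * (t₀ / t) ^ β) ^ (2 / β) = K2 * (t₀ / t) ^ (2:ℕ) := by
      rw [Real.mul_rpow hKpos.le (by positivity), hK2def]
      congr 1
      rw [← Real.rpow_natCast (t₀ / t) 2, ← Real.rpow_mul (by positivity)]
      congr 1
      push_cast
      field_simp
    rw [h8] at h7
    have h9 : K2 * (t₀ / t) ^ (2:ℕ) * t ^ 2 ≤ B * t ^ 2 :=
      mul_le_mul_of_nonneg_right h7 (by positivity)
    have h10 : K2 * (t₀ / t) ^ (2:ℕ) * t ^ 2 = K2 * t₀ ^ 2 := by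
      field_simp
    linarith
  rw [ge_iff_le, abs_of_neg hneg, div_le_iff₀ (by positivity : (0:ℝ) < t ^ 3),
    div_mul_eq_mul_div, div_le_iff₀ (by positivity : (0:ℝ) < 2 * ε)]
  -- goal : K2 * t₀ ^ 2 * A ≤ -γ''' t * t ^ 3 * (2 * ε)
  rw [hAB] at hm
  have h11 : A * B * t ^ 2 ≤ (-γ''' t) * (2 * ε * t) * t ^ 2 :=
    mul_le_mul_of_nonneg_right hm (by positivity)
  have h12 : A * (K2 * t₀ ^ 2) ≤ A * (B * t ^ 2) :=
    mul_le_mul_of_nonneg_left hBb hApos.le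
  linarith [h11, h12]
end

section
/- Assume (a.3) and (a.4). Then the function t ↦ |G(t)/ψ(t)| is bounded near 0 and tends to 0 as t → 0, where G(s) = ∫₀ˢ e^{2πi g(t)} dt and g is any phase with g''(t) ≥ γ''(t) on (0,1]. Specifically, |G(t)/ψ(t)| ≤ C·γ''(t)^{−ρ/3} for small t. -/
open Real Set intervalIntegral MeasureTheory

/-! Van der Corput's second derivative test bounds `‖G(t)‖` by `4 γ''(t)^{-1/2}`: on `[ε, t]` the
phase satisfies `g'' ≥ γ''(t)` because `γ''` is antitone, and letting `ε → 0` costs nothing.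
The test itself is the classical split: `g'` has slope at least `L`, so `L |s - x₀| ≤ |g' s|` for
some `x₀`; integration by parts (the first derivative test) handles the pieces outside
`[x₀ - L^{-1/2}, x₀ + L^{-1/2}]` and the trivial bound the rest. Finally (a.4) and (a.3) give
`1 / |ψ t| ≤ C γ''(t)^{1/2 - ρ/3}`, so the quotient is `O(γ''(t)^{-ρ/3})`, which tends to `0` as
`γ''(t) → ∞`. -/

lemma norm_cexp_two_pi_I_mul (x : ℝ) : ‖Complex.exp (2 * π * Complex.I * x)‖ = 1 := by
  rw [show 2 * π * Complex.I * x = ((2 * π * x : ℝ) : ℂ) * Complex.I by push_cast; ring]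
  exact Complex.norm_exp_ofReal_mul_I _

lemma intervalIntegrable_cexp_two_pi_I_mul {g : ℝ → ℝ} {a b : ℝ} (hg : ContinuousOn g (uIoc a b)) :
    IntervalIntegrable (fun s => Complex.exp (2 * π * Complex.I * g s)) volume a b := by
  rw [intervalIntegrable_iff]
  refine IntegrableOn.of_bound measure_Ioc_lt_top ?_ 1
    (ae_of_all _ fun s => (norm_cexp_two_pi_I_mul (g s)).le)
  exact (Complex.continuous_exp.comp_continuousOn
    (continuousOn_const.mul (Complex.continuous_ofReal.comp_continuousOn hg))).aestronglyMeasurable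
      measurableSet_uIoc

lemma norm_integral_le_of_forall_Ioo_le {E : Type*} [NormedAddCommGroup E] [NormedSpace ℝ E]
    {f : ℝ → E} {a b B : ℝ} (hab : a < b) (hf : IntervalIntegrable f volume a b)
    (h : ∀ x ∈ Ioo a b, ‖∫ t in x..b, f t‖ ≤ B) : ‖∫ t in a..b, f t‖ ≤ B := by
  have hcont : ContinuousOn (fun x => ∫ t in x..b, f t) (closure (Ioo a b)) := by
    rw [closure_Ioo hab.ne, ← uIcc_of_le hab.le]
    exact continuousOn_primitive_interval_left
      ((intervalIntegrable_iff' (f := f)).1 hf)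
  exact le_on_closure h hcont.norm continuousOn_const
    (by rw [closure_Ioo hab.ne]; exact left_mem_Icc.2 hab.le)

lemma integral_cexp_two_pi_I_mul_eq_by_parts {g g' g'' : ℝ → ℝ} {a b : ℝ}
    (hg1 : ∀ t ∈ uIcc a b, HasDerivAt g (g' t) t) (hg2 : ∀ t ∈ uIcc a b, HasDerivAt g' (g'' t) t)
    (hne : ∀ t ∈ uIcc a b, g' t ≠ 0)
    (hw : IntervalIntegrable (fun s => g'' s / g' s ^ 2) volume a b) :
    ∫ s in a..b, Complex.exp (2 * π * Complex.I * g s) =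
      ((g' b)⁻¹ * Complex.exp (2 * π * Complex.I * g b)
        - (g' a)⁻¹ * Complex.exp (2 * π * Complex.I * g a)
        + ∫ s in a..b, (g'' s / g' s ^ 2 : ℝ) * Complex.exp (2 * π * Complex.I * g s))
        / (2 * π * Complex.I) := by
  set K : ℂ := 2 * π * Complex.I
  have hK : K ≠ 0 := by simp [K, pi_ne_zero]
  have hu : ∀ t ∈ uIcc a b, HasDerivAt (fun s => (((g' s)⁻¹ : ℝ) : ℂ))
      ((-(g'' t / g' t ^ 2) : ℝ) : ℂ) t := fun t ht => by
    simpa [neg_div] using ((hg2 t ht).inv (hne t ht)).ofReal_comp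
  have hv : ∀ t ∈ uIcc a b, HasDerivAt (fun s => Complex.exp (K * g s))
      (Complex.exp (K * g t) * (K * g' t)) t := fun t ht =>
    ((hg1 t ht).ofReal_comp.const_mul K).cexp
  have hv' : ContinuousOn (fun t => Complex.exp (K * g t) * (K * g' t)) (uIcc a b) :=
    (HasDerivAt.continuousOn hv).mul
      (continuousOn_const.mul (Complex.continuous_ofReal.comp_continuousOn
        (HasDerivAt.continuousOn hg2)))
  have hu' : IntervalIntegrable (fun s => ((-(g'' s / g' s ^ 2) : ℝ) : ℂ)) volume a b :=
    ⟨hw.1.neg.ofReal, hw.2.neg.ofReal⟩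
  have hparts := integral_mul_deriv_eq_deriv_mul hu hv hu' hv'.intervalIntegrable
  have hlhs : ∫ s in a..b, (((g' s)⁻¹ : ℝ) : ℂ) * (Complex.exp (K * g s) * (K * g' s)) =
      K * ∫ s in a..b, Complex.exp (K * g s) := by
    rw [← intervalIntegral.integral_const_mul]
    refine integral_congr fun s hs => ?_
    have : (g' s : ℂ) ≠ 0 := by exact_mod_cast hne s hs
    push_cast
    field_simp
  rw [hlhs] at hparts
  rw [eq_div_iff hK, mul_comm, hparts]
  simp only [Complex.ofReal_neg, neg_mul, intervalIntegral.integral_neg, sub_neg_eq_add]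

lemma norm_integral_cexp_two_pi_I_mul_le_of_le_abs_deriv {g g' g'' : ℝ → ℝ} {a b μ : ℝ}
    (hab : a ≤ b) (hμ : 0 < μ)
    (hg1 : ∀ t ∈ Icc a b, HasDerivAt g (g' t) t) (hg2 : ∀ t ∈ Icc a b, HasDerivAt g' (g'' t) t)
    (hg'' : ∀ t ∈ Icc a b, 0 ≤ g'' t) (hlow : ∀ t ∈ Ioo a b, μ ≤ |g' t|) :
    ‖∫ s in a..b, Complex.exp (2 * π * Complex.I * g s)‖ ≤ 1 / μ := by
  rcases hab.eq_or_lt with rfl | hab'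
  · simp only [intervalIntegral.integral_same, norm_zero]; positivity
  have hlow' : ∀ t ∈ Icc a b, μ ≤ |g' t| := fun t ht =>
    le_on_closure hlow continuousOn_const
      (closure_Ioo hab'.ne ▸ (HasDerivAt.continuousOn hg2).abs) (closure_Ioo hab'.ne ▸ ht)
  have hinv : ∀ t ∈ Icc a b, |(g' t)⁻¹| ≤ μ⁻¹ := fun t ht => by
    rw [abs_inv]; exact inv_anti₀ hμ (hlow' t ht)
  have hne : ∀ t ∈ Icc a b, g' t ≠ 0 := fun t ht h0 => by
    have := hlow' t ht; rw [h0, abs_zero] at this; linarith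
  rw [← uIcc_of_le hab] at hg1 hg2 hne hg''
  have hF : ∀ t ∈ uIcc a b, HasDerivAt (fun s => -(g' s)⁻¹) (g'' t / g' t ^ 2) t :=
    fun t ht => by
      have h := ((hg2 t ht).inv (hne t ht)).neg
      rwa [neg_div, neg_neg] at h
  have hw_nonneg : ∀ t ∈ uIcc a b, 0 ≤ g'' t / g' t ^ 2 := fun t ht =>
    div_nonneg (hg'' t ht) (sq_nonneg _)
  have hw : IntervalIntegrable (fun s => g'' s / g' s ^ 2) volume a b :=
    intervalIntegrable_deriv_of_nonneg (HasDerivAt.continuousOn hF)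
      (fun t ht => hF t (Ioo_subset_Icc_self ht)) (fun t ht => hw_nonneg t (Ioo_subset_Icc_self ht))
  have hrem : ‖∫ s in a..b, (g'' s / g' s ^ 2 : ℝ) * Complex.exp (2 * π * Complex.I * g s)‖
      ≤ (g' a)⁻¹ - (g' b)⁻¹ :=
    calc _ ≤ ∫ s in a..b, ‖(g'' s / g' s ^ 2 : ℝ) * Complex.exp (2 * π * Complex.I * g s)‖ :=
          intervalIntegral.norm_integral_le_integral_norm hab
      _ = ∫ s in a..b, g'' s / g' s ^ 2 := intervalIntegral.integral_congr fun s hs => by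
          simp only [norm_mul, norm_cexp_two_pi_I_mul, mul_one, Complex.norm_real,
            Real.norm_of_nonneg (hw_nonneg s hs)]
      _ = (g' a)⁻¹ - (g' b)⁻¹ := by rw [integral_eq_sub_of_hasDerivAt hF hw]; ring
  have ha := hinv a (left_mem_Icc.2 hab)
  have hb := hinv b (right_mem_Icc.2 hab)
  rw [integral_cexp_two_pi_I_mul_eq_by_parts hg1 hg2 hne hw, norm_div]
  have hnum : ‖(g' b)⁻¹ * Complex.exp (2 * π * Complex.I * g b)
      - (g' a)⁻¹ * Complex.exp (2 * π * Complex.I * g a)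
      + ∫ s in a..b, (g'' s / g' s ^ 2 : ℝ) * Complex.exp (2 * π * Complex.I * g s)‖ ≤ 4 * μ⁻¹ := by
    refine (norm_add_le _ _).trans ((add_le_add_left (norm_sub_le _ _) _).trans ?_)
    simp only [norm_mul, norm_cexp_two_pi_I_mul, mul_one, Complex.norm_real,
      Real.norm_eq_abs]
    linarith [abs_le.1 ha, abs_le.1 hb]
  have hK : ‖2 * π * Complex.I‖ = 2 * π := by simp [abs_of_pos pi_pos]
  rw [hK, div_le_iff₀ (by positivity)]
  calc _ ≤ 4 * μ⁻¹ := hnum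
    _ ≤ 1 / μ * (2 * π) := by rw [one_div, mul_comm]; gcongr; linarith [two_le_pi]

lemma norm_integral_cexp_two_pi_I_mul_le_of_le_abs_deriv_away {g g' g'' : ℝ → ℝ}
    {a b x₀ δ μ : ℝ} (hx₀ : x₀ ∈ Icc a b) (hδ : 0 ≤ δ) (hμ : 0 < μ)
    (hg1 : ∀ t ∈ Icc a b, HasDerivAt g (g' t) t) (hg2 : ∀ t ∈ Icc a b, HasDerivAt g' (g'' t) t)
    (hg'' : ∀ t ∈ Icc a b, 0 ≤ g'' t) (hfar : ∀ s ∈ Icc a b, δ ≤ |s - x₀| → μ ≤ |g' s|) :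
    ‖∫ s in a..b, Complex.exp (2 * π * Complex.I * g s)‖ ≤ 2 / μ + 2 * δ := by
  have hab : a ≤ b := hx₀.1.trans hx₀.2
  set p := max a (x₀ - δ)
  set q := min b (x₀ + δ)
  have hpq : p ≤ q := max_le (le_min hab (by linarith [hx₀.1]))
    (le_min (by linarith [hx₀.2]) (by linarith))
  have hp : p ∈ Icc a b := ⟨le_max_left _ _, hpq.trans (min_le_left _ _)⟩
  have hq : q ∈ Icc a b := ⟨hp.1.trans hpq, min_le_left _ _⟩
  have hint : ∀ c ∈ Icc a b, ∀ d ∈ Icc a b,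
      IntervalIntegrable (fun s => Complex.exp (2 * π * Complex.I * g s)) volume c d :=
    fun c hc d hd => intervalIntegrable_cexp_two_pi_I_mul
      ((HasDerivAt.continuousOn hg1).mono (uIoc_subset_uIcc.trans (uIcc_subset_Icc hc hd)))
  have hleft : ‖∫ s in a..p, Complex.exp (2 * π * Complex.I * g s)‖ ≤ 1 / μ := by
    have hsub : Icc a p ⊆ Icc a b := Icc_subset_Icc le_rfl hp.2
    refine norm_integral_cexp_two_pi_I_mul_le_of_le_abs_deriv hp.1 hμ (fun t ht => hg1 t (hsub ht))
      (fun t ht => hg2 t (hsub ht)) (fun t ht => hg'' t (hsub ht)) fun s hs => ?_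
    have : s < x₀ - δ := (lt_max_iff.1 hs.2).resolve_left hs.1.not_gt
    exact hfar s (hsub (Ioo_subset_Icc_self hs)) (le_abs.2 (.inr (by linarith)))
  have hright : ‖∫ s in q..b, Complex.exp (2 * π * Complex.I * g s)‖ ≤ 1 / μ := by
    have hsub : Icc q b ⊆ Icc a b := Icc_subset_Icc hq.1 le_rfl
    refine norm_integral_cexp_two_pi_I_mul_le_of_le_abs_deriv hq.2 hμ (fun t ht => hg1 t (hsub ht))
      (fun t ht => hg2 t (hsub ht)) (fun t ht => hg'' t (hsub ht)) fun s hs => ?_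
    have : x₀ + δ < s := (min_lt_iff.1 hs.1).resolve_left hs.2.not_gt
    exact hfar s (hsub (Ioo_subset_Icc_self hs)) (le_abs.2 (.inl (by linarith)))
  have hmid : ‖∫ s in p..q, Complex.exp (2 * π * Complex.I * g s)‖ ≤ 2 * δ := by
    refine (norm_integral_le_of_norm_le_const fun s _ => (norm_cexp_two_pi_I_mul (g s)).le).trans ?_
    rw [one_mul, abs_of_nonneg (sub_nonneg.2 hpq)]
    linarith [min_le_right b (x₀ + δ), le_max_right a (x₀ - δ)]
  rw [← integral_add_adjacent_intervals (hint a (left_mem_Icc.2 hab) p hp)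
      (hint p hp b (right_mem_Icc.2 hab)),
    ← integral_add_adjacent_intervals (hint p hp q hq) (hint q hq b (right_mem_Icc.2 hab))]
  calc _ ≤ 1 / μ + (2 * δ + 1 / μ) :=
        (norm_add_le _ _).trans
          (add_le_add hleft ((norm_add_le _ _).trans (add_le_add hmid hright)))
    _ = 2 / μ + 2 * δ := by ring

lemma exists_forall_mul_abs_sub_le_abs {f : ℝ → ℝ} {a b L : ℝ} (hab : a ≤ b)
    (hf : ContinuousOn f (Icc a b))
    (hslope : ∀ s ∈ Icc a b, ∀ t ∈ Icc a b, s ≤ t → L * (t - s) ≤ f t - f s) :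
    ∃ x₀ ∈ Icc a b, ∀ s ∈ Icc a b, L * |s - x₀| ≤ |f s| := by
  -- `x₀` is a zero of `f`, or an endpoint beyond which `f` keeps one sign
  obtain ⟨x₀, hx₀, hleft, hright⟩ : ∃ x₀ ∈ Icc a b, (x₀ = a ∨ f x₀ ≤ 0) ∧ (x₀ = b ∨ 0 ≤ f x₀) := by
    by_cases ha : 0 ≤ f a
    · exact ⟨a, left_mem_Icc.2 hab, .inl rfl, .inr ha⟩
    by_cases hb : f b ≤ 0
    · exact ⟨b, right_mem_Icc.2 hab, .inr hb, .inl rfl⟩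
    obtain ⟨x₀, hx₀, hzero⟩ :=
      intermediate_value_Icc hab hf (show (0:ℝ) ∈ Icc (f a) (f b) by constructor <;> linarith)
    exact ⟨x₀, hx₀, .inr hzero.le, .inr hzero.ge⟩
  refine ⟨x₀, hx₀, fun s hs => ?_⟩
  rcases lt_trichotomy s x₀ with hsx | rfl | hxs
  · have := hslope s hs x₀ hx₀ hsx.le
    rcases hleft with rfl | h0
    · exact absurd hs.1 (not_le.2 hsx)
    · rw [abs_of_neg (sub_neg.2 hsx)]
      linarith [neg_abs_le (f s)]
  · simp
  · have := hslope x₀ hx₀ s hs hxs.le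
    rcases hright with rfl | h0
    · exact absurd hs.2 (not_le.2 hxs)
    · rw [abs_of_pos (sub_pos.2 hxs)]
      linarith [le_abs_self (f s)]

lemma norm_integral_cexp_two_pi_I_mul_le_of_le_deriv_deriv {g g' g'' : ℝ → ℝ} {a b L : ℝ}
    (hab : a ≤ b) (hL : 0 < L)
    (hg1 : ∀ t ∈ Icc a b, HasDerivAt g (g' t) t) (hg2 : ∀ t ∈ Icc a b, HasDerivAt g' (g'' t) t)
    (hg'' : ∀ t ∈ Icc a b, L ≤ g'' t) :
    ‖∫ s in a..b, Complex.exp (2 * π * Complex.I * g s)‖ ≤ 4 / √L := by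
  have hm : 0 < √L := sqrt_pos.2 hL
  have hg'cont : ContinuousOn g' (Icc a b) := HasDerivAt.continuousOn hg2
  have hslope : ∀ s ∈ Icc a b, ∀ t ∈ Icc a b, s ≤ t → L * (t - s) ≤ g' t - g' s := by
    refine (convex_Icc a b).mul_sub_le_image_sub_of_le_deriv hg'cont ?_ ?_ <;>
      intro t ht <;> rw [interior_Icc] at ht
    · exact (hg2 t (Ioo_subset_Icc_self ht)).differentiableAt.differentiableWithinAt
    · rw [(hg2 t (Ioo_subset_Icc_self ht)).deriv]; exact hg'' t (Ioo_subset_Icc_self ht)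
  obtain ⟨x₀, hx₀, hdist⟩ := exists_forall_mul_abs_sub_le_abs hab hg'cont hslope
  have hfar : ∀ s ∈ Icc a b, 1 / √L ≤ |s - x₀| → √L ≤ |g' s| := fun s hs h =>
    calc √L = L * (1 / √L) := by field_simp; exact sq_sqrt hL.le
      _ ≤ L * |s - x₀| := by gcongr
      _ ≤ |g' s| := hdist s hs
  calc _ ≤ 2 / √L + 2 * (1 / √L) :=
        norm_integral_cexp_two_pi_I_mul_le_of_le_abs_deriv_away hx₀ (by positivity) hm hg1 hg2
          (fun t ht => hL.le.trans (hg'' t ht)) hfar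
    _ = 4 / √L := by ring

lemma norm_integral_cexp_two_pi_I_mul_le_of_le_deriv_deriv_Ioc {g g' g'' : ℝ → ℝ} {a b L : ℝ}
    (hab : a < b) (hL : 0 < L)
    (hg1 : ∀ t ∈ Ioc a b, HasDerivAt g (g' t) t) (hg2 : ∀ t ∈ Ioc a b, HasDerivAt g' (g'' t) t)
    (hg'' : ∀ t ∈ Ioc a b, L ≤ g'' t) :
    ‖∫ s in a..b, Complex.exp (2 * π * Complex.I * g s)‖ ≤ 4 / √L := by
  have hsub : ∀ x ∈ Ioo a b, Icc x b ⊆ Ioc a b := fun x hx => Icc_subset_Ioc hx.1 le_rfl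
  refine norm_integral_le_of_forall_Ioo_le hab
    (intervalIntegrable_cexp_two_pi_I_mul (uIoc_of_le hab.le ▸ HasDerivAt.continuousOn hg1))
    fun x hx => norm_integral_cexp_two_pi_I_mul_le_of_le_deriv_deriv hx.2.le hL
      (fun t ht => hg1 t (hsub x hx ht)) (fun t ht => hg2 t (hsub x hx ht))
      (fun t ht => hg'' t (hsub x hx ht))

lemma div_abs_le_mul_rpow_neg_div_three {N ψ γ₃ x ρ C₃ C₄ : ℝ} (hx : 0 < x) (hC₃ : 0 ≤ C₃)
    (hC₄ : 0 ≤ C₄) (hN : N ≤ 4 / √x) (h₃ : |γ₃| ≤ C₃ * x ^ ((3:ℝ)/2 - ρ))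
    (h₄ : 1 / |ψ| ≤ C₄ * |γ₃| ^ ((1:ℝ)/3)) :
    N / |ψ| ≤ 4 * C₄ * C₃ ^ ((1:ℝ)/3) * x ^ (-ρ/3) := by
  have hsplit : x ^ (((3:ℝ)/2 - ρ) * (1/3)) = x ^ (-ρ/3) * √x := by
    rw [sqrt_eq_rpow, ← rpow_add hx]; ring_nf
  calc N / |ψ| = N * (1 / |ψ|) := div_eq_mul_one_div _ _
    _ ≤ 4 / √x * (C₄ * (C₃ * x ^ ((3:ℝ)/2 - ρ)) ^ ((1:ℝ)/3)) :=
        mul_le_mul hN (h₄.trans (by gcongr)) (by positivity) (by positivity)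
    _ = 4 * C₄ * C₃ ^ ((1:ℝ)/3) * x ^ (-ρ/3) := by
        rw [mul_rpow hC₃ (rpow_nonneg hx.le _), ← rpow_mul hx.le, hsplit]
        field_simp

theorem stmt_18_general
    (γ'' ψ : ℝ → ℝ) (ρ : ℝ) (hρ : 0 < ρ)
    (hpos : ∀ t ∈ Ioc (0:ℝ) 1, 0 < γ'' t)
    (hanti : AntitoneOn γ'' (Ioc (0:ℝ) 1))
    (htop : Filter.Tendsto γ'' (nhdsWithin 0 (Ioi 0)) Filter.atTop)
    (γ''' : ℝ → ℝ)
    (C₃ C₄ : ℝ) (hC₃ : 0 < C₃) (hC₄ : 0 < C₄)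
    (ha3 : ∀ t ∈ Ioc (0:ℝ) 1, |γ''' t| ≤ C₃ * γ'' t ^ ((3:ℝ)/2 - ρ))
    (ha4 : ∀ t ∈ Ioc (0:ℝ) 1, 1 / |ψ t| ≤ C₄ * |γ''' t| ^ ((1:ℝ)/3))
    (g g' g'' : ℝ → ℝ)
    (hg1 : ∀ t ∈ Ioc (0:ℝ) 1, HasDerivAt g (g' t) t)
    (hg2 : ∀ t ∈ Ioc (0:ℝ) 1, HasDerivAt g' (g'' t) t)
    (hglower : ∀ t ∈ Ioc (0:ℝ) 1, g'' t ≥ γ'' t) :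
    (∃ C : ℝ, 0 < C ∧ ∃ T : ℝ, 0 < T ∧ T ≤ 1 ∧ ∀ t : ℝ, 0 < t → t ≤ T →
        ‖∫ s in (0:ℝ)..t, Complex.exp (2 * Real.pi * Complex.I * g s)‖ / |ψ t| ≤
          C * γ'' t ^ (-ρ/3)) ∧
    Filter.Tendsto
      (fun t : ℝ =>
        ‖∫ s in (0:ℝ)..t, Complex.exp (2 * Real.pi * Complex.I * g s)‖ / |ψ t|)
      (nhdsWithin 0 (Ioi 0)) (nhds 0) := by
  have hbound : ∀ t : ℝ, 0 < t → t ≤ 1 →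
      ‖∫ s in (0:ℝ)..t, Complex.exp (2 * Real.pi * Complex.I * g s)‖ / |ψ t| ≤
        4 * C₄ * C₃ ^ ((1:ℝ)/3) * γ'' t ^ (-ρ/3) := fun t ht0 ht1 => by
    have ht : t ∈ Ioc (0:ℝ) 1 := ⟨ht0, ht1⟩
    have hsub : Ioc 0 t ⊆ Ioc (0:ℝ) 1 := Ioc_subset_Ioc_right ht1
    refine div_abs_le_mul_rpow_neg_div_three (hpos t ht) hC₃.le hC₄.le ?_ (ha3 t ht) (ha4 t ht)
    exact norm_integral_cexp_two_pi_I_mul_le_of_le_deriv_deriv_Ioc ht0 (hpos t ht)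
      (fun s hs => hg1 s (hsub hs)) (fun s hs => hg2 s (hsub hs))
      fun s hs => (hanti (hsub hs) ht hs.2).trans (hglower s (hsub hs))
  refine ⟨⟨_, by positivity, 1, one_pos, le_rfl, hbound⟩, ?_⟩
  have hlim : Filter.Tendsto (fun t => 4 * C₄ * C₃ ^ ((1:ℝ)/3) * γ'' t ^ (-ρ/3))
      (nhdsWithin 0 (Ioi 0)) (nhds 0) := by
    simpa [neg_div] using ((tendsto_rpow_neg_atTop (by positivity : 0 < ρ / 3)).comp htop).const_mul
      (4 * C₄ * C₃ ^ ((1:ℝ)/3))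
  refine squeeze_zero' (.of_forall fun t => by positivity) ?_ hlim
  filter_upwards [Ioc_mem_nhdsGT one_pos] with t ht using hbound t ht.1 ht.2

/-- under (a.3) and (a.4), for any phase g with monotone g'' ≥ γ''
    on (0,1], the quantity |G(t)/ψ(t)| (with G(s) = ∫₀ˢ e^{2πi g}) is bounded by
    C·γ''(t)^{−ρ/3} for small t, and tends to 0 as t → 0⁺. -/
theorem stmt_18
    (γ'' ψ : ℝ → ℝ) (ρ : ℝ) (hρ : 0 < ρ) (hρ' : ρ < 3 / 2)
    (hpos : ∀ t ∈ Ioc (0:ℝ) 1, 0 < γ'' t)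
    (hanti : AntitoneOn γ'' (Ioc (0:ℝ) 1))
    (htop : Filter.Tendsto γ'' (nhdsWithin 0 (Ioi 0)) Filter.atTop)
    (γ''' : ℝ → ℝ)
    (C₃ C₄ : ℝ) (hC₃ : 0 < C₃) (hC₄ : 0 < C₄)
    (ha3 : ∀ t ∈ Ioc (0:ℝ) 1, |γ''' t| ≤ C₃ * γ'' t ^ ((3:ℝ)/2 - ρ))
    (ha4 : ∀ t ∈ Ioc (0:ℝ) 1, 1 / |ψ t| ≤ C₄ * |γ''' t| ^ ((1:ℝ)/3))
    (g g' g'' : ℝ → ℝ)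
    (hg1 : ∀ t ∈ Ioc (0:ℝ) 1, HasDerivAt g (g' t) t)
    (hg2 : ∀ t ∈ Ioc (0:ℝ) 1, HasDerivAt g' (g'' t) t)
    (hg''mono : MonotoneOn g'' (Ioc (0:ℝ) 1) ∨ AntitoneOn g'' (Ioc (0:ℝ) 1))
    (hglower : ∀ t ∈ Ioc (0:ℝ) 1, g'' t ≥ γ'' t) :
    (∃ C : ℝ, 0 < C ∧ ∃ T : ℝ, 0 < T ∧ T ≤ 1 ∧ ∀ t : ℝ, 0 < t → t ≤ T →
        ‖∫ s in (0:ℝ)..t, Complex.exp (2 * Real.pi * Complex.I * g s)‖ / |ψ t| ≤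
          C * γ'' t ^ (-ρ/3)) ∧
    Filter.Tendsto
      (fun t : ℝ =>
        ‖∫ s in (0:ℝ)..t, Complex.exp (2 * Real.pi * Complex.I * g s)‖ / |ψ t|)
      (nhdsWithin 0 (Ioi 0)) (nhds 0) :=
  stmt_18_general γ'' ψ ρ hρ hpos hanti htop γ''' C₃ C₄ hC₃ hC₄ ha3 ha4 g g' g'' hg1 hg2 hglower
end
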